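/- The maximum over all three-module one-trit classical sequential processors of the correlation (1/64) · Σ_{x ∈ {0,1}^6} O(x) · T3(x) between the output O and the target function T3 equals 7/16 (i.e. 0.4375). -/

import Mathlib

/-!
Split `∑ₓ O(x)·T3(x)` into sixteen blocks, one for each `p = (X1,X2)` and `q = (X3,X4)`. Within a
block the last module answers with a fixed `±1`-function of `(X5,X6)`, and each block of `M3` has
exactly two nonzero entries `±1`, so every block contributes at most `2`. The first module maps four
`p`'s to three trits, so two `p₁ ≠ p₂` share a trit; the second module, after that trit, maps four
`q`'s to three trits, so two `q₁ ≠ q₂` share one too. On the rectangle `{p₁, p₂} × {q₁, q₂}` the last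
module therefore answers the same way, and there the four blocks contribute at most `4` instead of
`8`. Hence `∑ₓ O(x)·T3(x) ≤ 12 · 2 + 4 = 28`, and an explicit processor attains `28`.
-/

/-- Domain of six input bits. -/
abbrev Bits6 := Fin 2 × Fin 2 × Fin 2 × Fin 2 × Fin 2 × Fin 2

/-- The 4×16 matrix defining the target function of the three-module single-qutrit
processor. -/
def M3 : Fin 4 → Fin 16 → ℤ :=
  ![![ 0,  0, -1,  1,  0,  0,  1, -1, -1,  1,  0,  0,  1, -1,  0,  0],
    ![ 0,  0,  1, -1,  0,  0, -1,  1,  1, -1,  0,  0, -1,  1,  0,  0],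
    ![-1,  1,  0,  0,  1, -1,  0,  0,  0,  0,  1, -1,  0,  0, -1,  1],
    ![ 1, -1,  0,  0, -1,  1,  0,  0,  0,  0, -1,  1,  0,  0,  1, -1]]

/-- Row index `2*X1 + X2`. -/
def row4 (x1 x2 : Fin 2) : Fin 4 := ⟨2 * x1.val + x2.val, by omega⟩

/-- Column index `8*X3 + 4*X4 + 2*X5 + X6`. -/
def col16 (x3 x4 x5 x6 : Fin 2) : Fin 16 :=
  ⟨8 * x3.val + 4 * x4.val + 2 * x5.val + x6.val, by omega⟩

/-- The target function `T3 : {0,1}^6 → {-1,0,1}`. -/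
def T3 : Bits6 → ℤ
  | (x1, x2, x3, x4, x5, x6) => M3 (row4 x1 x2) (col16 x3 x4 x5 x6)

/-- Output of a three-module one-trit classical sequential processor given by the
module strategies `g1`, `g2`, `g3`. -/
def output3trit (g1 : Fin 2 × Fin 2 → Fin 3) (g2 : Fin 3 → Fin 2 × Fin 2 → Fin 3)
    (g3 : Fin 3 → Fin 2 × Fin 2 → ℤ) : Bits6 → ℤ
  | (x1, x2, x3, x4, x5, x6) => g3 (g2 (g1 (x1, x2)) (x3, x4)) (x5, x6)

def blockCorrelation (h : Fin 2 × Fin 2 → ℤ) (p q : Fin 2 × Fin 2) : ℤ :=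
  ∑ r : Fin 2 × Fin 2, h r * M3 (row4 p.1 p.2) (col16 q.1 q.2 r.1 r.2)

theorem sum_output3trit_mul_T3 (g1 : Fin 2 × Fin 2 → Fin 3) (g2 : Fin 3 → Fin 2 × Fin 2 → Fin 3)
    (g3 : Fin 3 → Fin 2 × Fin 2 → ℤ) :
    ∑ x : Bits6, output3trit g1 g2 g3 x * T3 x =
      ∑ p : Fin 2 × Fin 2, ∑ q : Fin 2 × Fin 2, blockCorrelation (g3 (g2 (g1 p) q)) p q := by
  simp only [Fintype.sum_prod_type, output3trit, T3, blockCorrelation]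

theorem exists_bool_eq_ite_of_forall_eq_neg_one_or_eq_one {ι : Type*} (h : ι → ℤ)
    (hh : ∀ i, h i = -1 ∨ h i = 1) : ∃ t : ι → Bool, h = fun i => if t i then 1 else -1 :=
  ⟨fun i => h i = 1, funext fun i => by rcases hh i with hi | hi <;> simp [hi]⟩

theorem blockCorrelation_le_two (h : Fin 2 × Fin 2 → ℤ) (hh : ∀ r, h r = -1 ∨ h r = 1)
    (p q : Fin 2 × Fin 2) : blockCorrelation h p q ≤ 2 := by
  obtain ⟨t, rfl⟩ := exists_bool_eq_ite_of_forall_eq_neg_one_or_eq_one h hh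
  revert t p q
  decide

/-- Each block correlation is `±(h a - h b)`, with `{a, b} = {(0,0), (0,1)}` or `{(1,0), (1,1)}`;
around a rectangle these cancel or add up to `±2 (h a - h b)`. -/
theorem blockCorrelation_rectangle_le_four (h : Fin 2 × Fin 2 → ℤ) (hh : ∀ r, h r = -1 ∨ h r = 1)
    (p₁ p₂ q₁ q₂ : Fin 2 × Fin 2) (hp : p₁ ≠ p₂) (hq : q₁ ≠ q₂) :
    blockCorrelation h p₁ q₁ + blockCorrelation h p₁ q₂ +
      (blockCorrelation h p₂ q₁ + blockCorrelation h p₂ q₂) ≤ 4 := by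
  obtain ⟨t, rfl⟩ := exists_bool_eq_ite_of_forall_eq_neg_one_or_eq_one h hh
  revert t p₁ p₂ q₁ q₂
  decide

theorem sum_le_of_le_of_sum_le {ι : Type*} [Fintype ι] [DecidableEq ι] (f : ι → ℤ) (s : Finset ι)
    (c d : ℤ) (hf : ∀ i, f i ≤ c) (hs : ∑ i ∈ s, f i ≤ d) :
    ∑ i, f i ≤ (Fintype.card ι - s.card : ℕ) * c + d := by
  rw [← Finset.sum_compl_add_sum s, ← Finset.card_compl, ← nsmul_eq_mul]
  exact add_le_add (Finset.sum_le_card_nsmul _ f c fun i _ => hf i) hs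

theorem sum_output3trit_mul_T3_le (g1 : Fin 2 × Fin 2 → Fin 3)
    (g2 : Fin 3 → Fin 2 × Fin 2 → Fin 3) (g3 : Fin 3 → Fin 2 × Fin 2 → ℤ)
    (hg3 : ∀ s r, g3 s r = -1 ∨ g3 s r = 1) :
    ∑ x : Bits6, output3trit g1 g2 g3 x * T3 x ≤ 28 := by
  obtain ⟨p₁, p₂, hp, hg1⟩ := Fintype.exists_ne_map_eq_of_card_lt g1 (by simp)
  obtain ⟨q₁, q₂, hq, hg2⟩ := Fintype.exists_ne_map_eq_of_card_lt (g2 (g1 p₁)) (by simp)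
  have hrect : ∑ x ∈ {p₁, p₂} ×ˢ {q₁, q₂}, blockCorrelation (g3 (g2 (g1 x.1) x.2)) x.1 x.2 ≤ 4 := by
    rw [Finset.sum_product, Finset.sum_pair hp, Finset.sum_pair hq, Finset.sum_pair hq, ← hg1, hg2]
    exact blockCorrelation_rectangle_le_four _ (hg3 _) _ _ _ _ hp hq
  rw [sum_output3trit_mul_T3, ← Fintype.sum_prod_type']
  refine (sum_le_of_le_of_sum_le _ _ 2 4
    (fun x => blockCorrelation_le_two _ (hg3 _) _ _) hrect).trans ?_
  simp [Finset.card_product, Finset.card_pair hp, Finset.card_pair hq]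

def optimalG1 : Fin 2 × Fin 2 → Fin 3 := fun p => ![0, 1, 0, 2] (row4 p.1 p.2)

def optimalG2 : Fin 3 → Fin 2 × Fin 2 → Fin 3 :=
  fun s q => ![![2, 0, 0, 1], ![0, 1, 1, 2], ![1, 2, 1, 0]] s (row4 q.1 q.2)

def optimalG3 : Fin 3 → Fin 2 × Fin 2 → ℤ :=
  fun s r => ![![1, 1, 1, -1], ![1, -1, -1, 1], ![-1, 1, -1, 1]] s (row4 r.1 r.2)

theorem sum_output3trit_optimal_mul_T3 :
    ∑ x : Bits6, output3trit optimalG1 optimalG2 optimalG3 x * T3 x = 28 := by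
  decide

/-- the maximum correlation `(1/64) · Σ_x O(x)·T3(x)` over all three-module
one-trit classical sequential processors equals `7/16 = 0.4375`. -/
theorem stmt9 :
    IsGreatest {c : ℚ | ∃ (g1 : Fin 2 × Fin 2 → Fin 3) (g2 : Fin 3 → Fin 2 × Fin 2 → Fin 3)
        (g3 : Fin 3 → Fin 2 × Fin 2 → ℤ),
      (∀ s p, g3 s p = -1 ∨ g3 s p = 1) ∧
      c = (1 / 64 : ℚ) * ∑ x : Bits6, ((output3trit g1 g2 g3 x * T3 x : ℤ) : ℚ)}
      (7 / 16) := by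
  refine ⟨⟨optimalG1, optimalG2, optimalG3, by decide, ?_⟩, ?_⟩
  · rw [← Int.cast_sum, sum_output3trit_optimal_mul_T3]
    norm_num
  · rintro c ⟨g1, g2, g3, hg3, rfl⟩
    have hle : ((∑ x : Bits6, output3trit g1 g2 g3 x * T3 x : ℤ) : ℚ) ≤ 28 := by
      exact_mod_cast sum_output3trit_mul_T3_le g1 g2 g3 hg3
    rw [← Int.cast_sum]
    linarith
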